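/- For every n ≥ 2 the graph H*_n — obtained from H_n by adding a pendant vertex u' adjacent only to u — is not a co-TT graph. -/

import Mathlib

/-- `G` is a co-TT (signed-interval) graph. -/
def IsCoTT {V : Type*} (G : SimpleGraph V) : Prop :=
  ∃ l r : V → ℝ, ∀ u v : V, u ≠ v → (G.Adj u v ↔ l u ≤ r v ∧ l v ≤ r u)

/-- Base adjacency of `H*_n`.  Vertices: `.inl i` is `x_{i+1}` for `0 ≤ i < n`;
`.inr 0 = w`, `.inr 1 = v`, `.inr 2 = y`, `.inr 3 = z`, `.inr 4 = u`,
`.inr 5 = u'`.  Edges of `H_n` (path `w, x_1, …, x_n, v`; `y` adjacent to `w` and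
all `x_i`; `z` adjacent to `v` and all `x_i`; `yz`, `uy`, `uz`) together with the
pendant edge `u'u`. -/
def hstarRel (n : ℕ) (a b : Fin n ⊕ Fin 6) : Prop :=
  (∃ i j : Fin n, a = .inl i ∧ b = .inl j ∧ (j : ℕ) = (i : ℕ) + 1) ∨
  (∃ i : Fin n, a = .inr 0 ∧ b = .inl i ∧ (i : ℕ) = 0) ∨
  (∃ i : Fin n, a = .inl i ∧ (i : ℕ) + 1 = n ∧ b = .inr 1) ∨
  (a = .inr 2 ∧ b = .inr 0) ∨
  (∃ i : Fin n, a = .inr 2 ∧ b = .inl i) ∨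
  (a = .inr 3 ∧ b = .inr 1) ∨
  (∃ i : Fin n, a = .inr 3 ∧ b = .inl i) ∨
  (a = .inr 2 ∧ b = .inr 3) ∨
  (a = .inr 4 ∧ b = .inr 2) ∨ (a = .inr 4 ∧ b = .inr 3) ∨
  (a = .inr 5 ∧ b = .inr 4)

/-- The graph `H*_n`. -/
def HstarGraph (n : ℕ) : SimpleGraph (Fin n ⊕ Fin 6) :=
  SimpleGraph.fromRel (hstarRel n)

/-!
In a co-TT representation, the middle vertex `u` of the induced path `u' u y` gets a genuine
interval `l u ≤ r u`. Every `x_i` is non-adjacent to `u`, so its interval lies strictly to one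
side of `u`'s, and since the `x_i` form a path they all lie on the same side; reflecting the line,
say the left. Then `v` and `w`, adjacent to `x_n` and `x_1`, satisfy `l v, l w < l u`, while
`y` and `z`, adjacent to `u`, satisfy `l u ≤ r y, r z`. The non-edges `yv` and `zw` then force
`r v < l y` and `r w < l z`, and together with the edges `yw` and `zv` this gives the cycle
`r v < l y ≤ r w < l z ≤ r v`.
-/

def IsCoTTRep {V : Type*} (G : SimpleGraph V) (l r : V → ℝ) : Prop :=
  ∀ u v : V, u ≠ v → (G.Adj u v ↔ l u ≤ r v ∧ l v ≤ r u)

theorem isCoTT_iff {V : Type*} (G : SimpleGraph V) : IsCoTT G ↔ ∃ l r, IsCoTTRep G l r :=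
  Iff.rfl

namespace IsCoTTRep

variable {V : Type*} {G : SimpleGraph V} {l r : V → ℝ}

theorem le_of_adj (h : IsCoTTRep G l r) {a b : V} (hab : G.Adj a b) : l a ≤ r b ∧ l b ≤ r a :=
  (h a b hab.ne).1 hab

theorem lt_or_lt_of_not_adj (h : IsCoTTRep G l r) {a b : V} (hne : a ≠ b) (hab : ¬ G.Adj a b) :
    r b < l a ∨ r a < l b := by
  contrapose! hab
  exact (h a b hne).2 hab

theorem reflect (h : IsCoTTRep G l r) : IsCoTTRep G (fun v => -r v) (fun v => -l v) := by
  intro a b hne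
  rw [h a b hne, neg_le_neg_iff, neg_le_neg_iff, and_comm]

theorem le_of_adj_of_adj_of_not_adj (h : IsCoTTRep G l r) {a b c : V} (hab : G.Adj a b)
    (hbc : G.Adj b c) (hne : a ≠ c) (hac : ¬ G.Adj a c) : l b ≤ r b := by
  by_contra! hb
  have := h.le_of_adj hab
  have := h.le_of_adj hbc
  rcases h.lt_or_lt_of_not_adj hne hac with hca | hac <;> linarith

theorem lt_of_adj_of_lt (h : IsCoTTRep G l r) {a b u : V} (hu : l u ≤ r u) (hab : G.Adj a b)
    (hbu : b ≠ u) (hbu' : ¬ G.Adj b u) (ha : r a < l u) : r b < l u := by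
  have := h.le_of_adj hab
  exact (h.lt_or_lt_of_not_adj hbu hbu').resolve_left (by linarith)

end IsCoTTRep

namespace HstarGraph

variable {n : ℕ} {l r : Fin n ⊕ Fin 6 → ℝ}

attribute [local simp] HstarGraph hstarRel

theorem inl_left_of_inl_zero_left (h : IsCoTTRep (HstarGraph n) l r) {hn : 0 < n}
    (hu : l (.inr 4) ≤ r (.inr 4)) (h0 : r (.inl ⟨0, hn⟩) < l (.inr 4)) (i : Fin n) :
    r (.inl i) < l (.inr 4) := by
  obtain ⟨k, hk⟩ := i
  induction k with
  | zero => exact h0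
  | succ k ih =>
    exact h.lt_of_adj_of_lt (a := .inl ⟨k, by omega⟩) hu (by simp) (by simp) (by simp)
      (ih (by omega))

theorem not_inl_zero_left (h : IsCoTTRep (HstarGraph n) l r) (hn : 0 < n) :
    ¬ r (.inl ⟨0, hn⟩) < l (.inr 4) := by
  intro h0
  have hu : l (.inr 4) ≤ r (.inr 4) :=
    h.le_of_adj_of_adj_of_not_adj (a := .inr 5) (c := .inr 2) (by simp) (by simp) (by simp)
      (by simp)
  have hlast := inl_left_of_inl_zero_left h hu h0 ⟨n - 1, by omega⟩
  have hwx := h.le_of_adj (a := .inr 0) (b := .inl ⟨0, hn⟩) (by simp)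
  have hxv := h.le_of_adj (a := .inl ⟨n - 1, by omega⟩) (b := .inr 1) (by simp; omega)
  have huy := h.le_of_adj (a := .inr 4) (b := .inr 2) (by simp)
  have huz := h.le_of_adj (a := .inr 4) (b := .inr 3) (by simp)
  have hyw := h.le_of_adj (a := .inr 2) (b := .inr 0) (by simp)
  have hzv := h.le_of_adj (a := .inr 3) (b := .inr 1) (by simp)
  have hvy : r (.inr 1) < l (.inr 2) :=
    (h.lt_or_lt_of_not_adj (a := .inr 2) (b := .inr 1) (by simp) (by simp)).resolve_right
      (by linarith)
  have hwz : r (.inr 0) < l (.inr 3) :=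
    (h.lt_or_lt_of_not_adj (a := .inr 3) (b := .inr 0) (by simp) (by simp)).resolve_right
      (by linarith)
  linarith

end HstarGraph

/-- For every `n ≥ 2`, `H*_n` is not a co-TT graph. -/
theorem HstarGraph_not_isCoTT : ∀ n : ℕ, 2 ≤ n → ¬ IsCoTT (HstarGraph n) := by
  intro n hn hG
  obtain ⟨l, r, h⟩ := (isCoTT_iff _).1 hG
  have hn0 : 0 < n := by omega
  rcases h.lt_or_lt_of_not_adj (a := .inr 4) (b := .inl ⟨0, hn0⟩) (by simp)
    (by simp [HstarGraph, hstarRel]) with hleft | hright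
  · exact HstarGraph.not_inl_zero_left h hn0 hleft
  · exact HstarGraph.not_inl_zero_left h.reflect hn0 (neg_lt_neg hright)
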